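/- arXiv:1410.3855 — 4 statements merged into one kernel-verified Lean document; each statement's English description precedes it below -/
import Mathlib

section
/- For coprime integers λ, μ with μ ≠ 0, every integer point (t₀,t₁,t₂,t₃) with (t₀,t₁) ≠ (0,0) on the line V_y = {λt₀ − μt₁ = 0, λμt₂ − λ²t₁ − μ²t₃ = 0} is of the form t₀ = μ²τ₀, t₁ = λμτ₀, t₂ = λ²τ₀ + μτ₁, t₃ = λτ₁ for unique integers τ₀ ≠ 0, τ₁. -/
/-- Every integer point (t₀,t₁,t₂,t₃) with (t₀,t₁) ≠ (0,0) on the line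
λt₀ − μt₁ = 0, λμt₂ − λ²t₁ − μ²t₃ = 0 (gcd(λ,μ)=1, μ ≠ 0) has a unique
parameterisation t₀ = μ²τ₀, t₁ = λμτ₀, t₂ = λ²τ₀ + μτ₁, t₃ = λτ₁ with τ₀ ≠ 0. -/
theorem line_parameterisation (l m : ℤ) (hlm : IsCoprime l m) (hm : m ≠ 0)
    (t0 t1 t2 t3 : ℤ) (h1 : l * t0 - m * t1 = 0)
    (h2 : l * m * t2 - l ^ 2 * t1 - m ^ 2 * t3 = 0) (ht : (t0, t1) ≠ (0, 0)) :
    ∃! τ : ℤ × ℤ, τ.1 ≠ 0 ∧ t0 = m ^ 2 * τ.1 ∧ t1 = l * m * τ.1 ∧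
      t2 = l ^ 2 * τ.1 + m * τ.2 ∧ t3 = l * τ.2 := by
  have hml : IsCoprime m l := hlm.symm
  -- m ∣ t0
  have hd1 : m ∣ t0 := by
    refine hml.dvd_of_dvd_mul_right ⟨t1, ?_⟩
    linarith
  obtain ⟨a, ha⟩ := hd1
  -- t1 = l * a
  have ht1 : t1 = l * a := by
    have : m * t1 = m * (l * a) := by linear_combination -h1 + l * ha
    exact mul_left_cancel₀ hm this
  -- m ∣ a
  have hd2 : m ∣ a := by
    refine (hml.pow_right (n := 3)).dvd_of_dvd_mul_right ⟨l * t2 - m * t3, ?_⟩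
    linear_combination -h2 - l ^ 2 * ht1
  obtain ⟨τ0, hτ0⟩ := hd2
  have ht0 : t0 = m ^ 2 * τ0 := by rw [ha, hτ0]; ring
  have ht1' : t1 = l * m * τ0 := by rw [ht1, hτ0]; ring
  -- key: l * t2 - l^3 * τ0 = m * t3
  have hkey : l * (t2 - l ^ 2 * τ0) = m * t3 := by
    have h3 : m * (l * (t2 - l ^ 2 * τ0)) = m * (m * t3) := by
      linear_combination h2 + l ^ 2 * ht1'
    exact mul_left_cancel₀ hm h3
  have hd3 : m ∣ (t2 - l ^ 2 * τ0) :=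
    hml.dvd_of_dvd_mul_left ⟨t3, by linarith⟩
  obtain ⟨τ1, hτ1⟩ := hd3
  have ht2 : t2 = l ^ 2 * τ0 + m * τ1 := by linarith
  have ht3 : t3 = l * τ1 := by
    have : m * t3 = m * (l * τ1) := by linear_combination l * hτ1 - hkey
    exact mul_left_cancel₀ hm this
  have hτ0ne : τ0 ≠ 0 := by
    rintro rfl
    apply ht
    simp only [Prod.mk.injEq]
    constructor <;> [skip; skip] <;> simp_all
  refine ⟨(τ0, τ1), ⟨hτ0ne, ht0, ht1', ht2, ht3⟩, ?_⟩
  rintro ⟨σ0, σ1⟩ ⟨-, hs0, -, hs2, -⟩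
  have e0 : σ0 = τ0 := by
    have := hs0.symm.trans ht0
    have hm2 : (m : ℤ) ^ 2 ≠ 0 := pow_ne_zero _ hm
    exact mul_left_cancel₀ hm2 this
  subst e0
  have e1 : σ1 = τ1 := by
    have := hs2.symm.trans ht2
    have : m * σ1 = m * τ1 := by linarith
    exact mul_left_cancel₀ hm this
  simp [e1]
end

section
/- For coprime integers λ, μ with μ ≠ 0, and integers τ₀ ≠ 0, τ₁, the vector (μ²τ₀, λμτ₀, λ²τ₀ + μτ₁, λτ₁) ∈ ℤ⁴ is primitive (its entries have gcd 1) if and only if gcd(τ₀, τ₁) = 1. -/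
/-!
A prime `p` dividing all four entries cannot divide both `λ` and `μ`. If `p ∣ μ`, then `p ∤ λ`, so
`p ∣ λτ₁` gives `p ∣ τ₁` and then `p ∣ λ²τ₀` gives `p ∣ τ₀`; if `p ∤ μ`, then `p ∣ μ²τ₀` gives
`p ∣ τ₀` and then `p ∣ μτ₁` gives `p ∣ τ₁`. Conversely every common divisor of `τ₀` and `τ₁`
divides all four entries, so the two gcds have the same prime divisors.
-/

theorem Prime.dvd_entries_iff {R : Type*} [CommRing R] {p l m t₀ t₁ : R} (hp : Prime p)
    (hlm : ¬(p ∣ l ∧ p ∣ m)) :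
    (p ∣ m ^ 2 * t₀ ∧ p ∣ l * m * t₀ ∧ p ∣ l ^ 2 * t₀ + m * t₁ ∧ p ∣ l * t₁) ↔
      p ∣ t₀ ∧ p ∣ t₁ := by
  constructor
  · rintro ⟨h₀, -, h₂, h₃⟩
    by_cases hm : p ∣ m
    · have hl : ¬p ∣ l := fun hl ↦ hlm ⟨hl, hm⟩
      have hlt₀ : p ∣ l ^ 2 * t₀ := (dvd_add_left (hm.mul_right t₁)).1 h₂
      exact ⟨(hp.dvd_mul.1 hlt₀).resolve_left (mt hp.dvd_of_dvd_pow hl),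
        (hp.dvd_mul.1 h₃).resolve_left hl⟩
    · have ht₀ : p ∣ t₀ := (hp.dvd_mul.1 h₀).resolve_left (mt hp.dvd_of_dvd_pow hm)
      have hmt₁ : p ∣ m * t₁ := (dvd_add_right (ht₀.mul_left (l ^ 2))).1 h₂
      exact ⟨ht₀, (hp.dvd_mul.1 hmt₁).resolve_left hm⟩
  · rintro ⟨h₀, h₁⟩
    exact ⟨h₀.mul_left _, h₀.mul_left _, (h₀.mul_left _).add (h₁.mul_left _), h₁.mul_left _⟩

theorem Int.gcd_eq_one_iff_forall_prime_not_dvd {a b : ℤ} :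
    Int.gcd a b = 1 ↔ ∀ p : ℕ, p.Prime → ¬((p : ℤ) ∣ a ∧ (p : ℤ) ∣ b) := by
  simp only [Nat.eq_one_iff_not_exists_prime_dvd, Int.dvd_gcd_iff]

theorem primitivity_criterion_general (l m τ0 τ1 : ℤ) (hlm : Int.gcd l m = 1) :
    Int.gcd (Int.gcd (Int.gcd (m ^ 2 * τ0) (l * m * τ0)) (l ^ 2 * τ0 + m * τ1))
        (l * τ1) = 1 ↔ Int.gcd τ0 τ1 = 1 := by
  have hcop := Int.gcd_eq_one_iff_forall_prime_not_dvd.1 hlm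
  simp only [Int.gcd_eq_one_iff_forall_prime_not_dvd, Int.dvd_coe_gcd_iff, and_assoc]
  exact forall₂_congr fun p hp ↦
    not_congr ((Nat.prime_iff_prime_int.1 hp).dvd_entries_iff (hcop p hp))

/-- For coprime λ, μ with μ ≠ 0 and τ₀ ≠ 0, the vector
(μ²τ₀, λμτ₀, λ²τ₀ + μτ₁, λτ₁) is primitive iff gcd(τ₀, τ₁) = 1. -/
theorem primitivity_criterion (l m τ0 τ1 : ℤ) (hlm : Int.gcd l m = 1)
    (hm : m ≠ 0) (hτ0 : τ0 ≠ 0) :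
    Int.gcd (Int.gcd (Int.gcd (m ^ 2 * τ0) (l * m * τ0)) (l ^ 2 * τ0 + m * τ1))
        (l * τ1) = 1 ↔ Int.gcd τ0 τ1 = 1 :=
  primitivity_criterion_general l m τ0 τ1 hlm
end

section
/- For every prime p and nonzero integer a₁ with p ∤ a₁, the sum S₁(s; a) defined by S₁(s;a) = Σ_{j₁≥1, j₁>2j₂, j₂≥0} p^{(j₁+j₂)(1−s)} I(j₁,j₂) + Σ_{j₁≥1, j₂<0} p^{−j₁s+j₁+j₂} I(j₁,j₂), where I(j₁,j₂) = ∫_{U_p²} e(a₁x/p^{j₁} + a₂y/p^{j₂}) dx dy, equals −p^{−s} for Re(s) > 3/2. -/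
/-! The integral `I(j₁, j₂)` factors into two integrals `∫_{U_p} ψ(c x) dx` with `c = a / p^j`.
Since `U_p = ℤ_p \ pℤ_p`, and a character integrates to zero over a subgroup on which it is
nontrivial, such an integral is `1 - 1/p`, `-1/p` or `0` according as `‖c‖ ≤ 1`, `‖c‖ = p` or
`‖c‖ > p`; here `μ(pℤ_p) = 1/p` because `ℤ_p` is the disjoint union of the `p` translates
`i + pℤ_p`. Hence `I(j₁, j₂) = 0` for `j₁ ≥ 2`, the first sum reduces to its term at `(1, 0)`,
the second to a geometric series in `p^{j₂}`, and the two add up to `-p^{-s}`. -/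

open MeasureTheory Metric

theorem AddChar.setIntegral_addSubgroup_eq_zero {G : Type*} [AddGroup G] [MeasurableSpace G]
    [MeasurableAdd G] (μ : Measure G) [μ.IsAddLeftInvariant] (χ : AddChar G ℂ)
    (H : AddSubgroup G) (hH : MeasurableSet (H : Set G)) {h : G} (hh : h ∈ H) (hχ : χ h ≠ 1) :
    ∫ x in H, χ x ∂μ = 0 := by
  rw [← integral_indicator hH]
  have htranslate : ∀ x, (H : Set G).indicator χ (h + x) = χ h * (H : Set G).indicator χ x := by
    intro x
    by_cases hx : x ∈ H
    · simp [hx, H.add_mem hh hx, AddChar.map_add_eq_mul]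
    · simp [hx, (H.add_mem_cancel_left hh).not.2 hx]
  have key := integral_add_left_eq_self (μ := μ) ((H : Set G).indicator χ) h
  simp_rw [htranslate, integral_const_mul] at key
  exact by_contra fun hne ↦ hχ ((mul_eq_right₀ hne).1 key)

theorem AddChar.setIntegral_comp_mul_left_eq_zero {K : Type*} [Field K] [MeasurableSpace K]
    [MeasurableAdd K] (μ : Measure K) [μ.IsAddLeftInvariant] (ψ : AddChar K ℂ)
    (H : AddSubgroup K) (hH : MeasurableSet (H : Set K)) {c y : K} (hc : c ≠ 0)
    (hy : c⁻¹ * y ∈ H) (hψy : ψ y ≠ 1) : ∫ x in H, ψ (c * x) ∂μ = 0 :=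
  setIntegral_addSubgroup_eq_zero μ (ψ.compAddMonoidHom (AddMonoidHom.mulLeft c)) H hH hy
    (by simpa [mul_inv_cancel_left₀ hc] using hψy)

theorem tsum_cpow_mul_eq_single (z s : ℂ) (I : ℤ → ℤ → ℂ)
    (hI : ∀ j₁ j₂, 2 ≤ j₁ → I j₁ j₂ = 0) :
    ∑' q : {q : ℤ × ℤ // 1 ≤ q.1 ∧ 2 * q.2 < q.1 ∧ 0 ≤ q.2},
        z ^ (((q.1.1 + q.1.2 : ℤ) : ℂ) * (1 - s)) * I q.1.1 q.1.2 = z ^ (1 - s) * I 1 0 := by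
  rw [tsum_eq_single ⟨(1, 0), by norm_num⟩]
  · simp
  · rintro ⟨⟨j₁, j₂⟩, h₁, h₂, h₃⟩ hne
    rw [hI j₁ j₂ ?_, mul_zero]
    by_contra! hj₁
    exact hne (Subtype.ext (Prod.ext (by simp; omega) (by simp; omega)))

theorem tsum_cpow_mul_eq_geometric (z s c : ℂ) (hz : 1 < ‖z‖) (I : ℤ → ℤ → ℂ)
    (hI₀ : ∀ j₁ j₂, 2 ≤ j₁ → I j₁ j₂ = 0) (hI₁ : ∀ j₂ < 0, I 1 j₂ = c) :
    ∑' q : {q : ℤ × ℤ // 1 ≤ q.1 ∧ q.2 < 0},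
        z ^ (-((q.1.1 : ℤ) : ℂ) * s + ((q.1.1 : ℤ) : ℂ) + ((q.1.2 : ℤ) : ℂ)) * I q.1.1 q.1.2
      = z ^ (1 - s) * c / (z - 1) := by
  have hz₀ : z ≠ 0 := norm_pos_iff.1 (one_pos.trans hz)
  set emb : ℕ → {q : ℤ × ℤ // 1 ≤ q.1 ∧ q.2 < 0} := fun n ↦ ⟨(1, -n - 1), le_rfl, by omega⟩
  have hemb : Function.Injective emb := fun m n h ↦ by
    have := congrArg (fun q ↦ q.1.2) h
    simp only [emb, sub_left_inj, neg_inj] at this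
    exact_mod_cast this
  rw [← hemb.tsum_eq]
  · have hterm : ∀ n : ℕ, z ^ (-((1 : ℤ) : ℂ) * s + ((1 : ℤ) : ℂ) + ((-n - 1 : ℤ) : ℂ))
        * I 1 (-n - 1) = z ^ (1 - s) * c * z⁻¹ * z⁻¹ ^ n := by
      intro n
      rw [hI₁ _ (by omega), show -((1 : ℤ) : ℂ) * s + ((1 : ℤ) : ℂ) + ((-n - 1 : ℤ) : ℂ)
        = (1 - s) + ((-(n + 1 : ℕ) : ℤ) : ℂ) by push_cast; ring, Complex.cpow_add _ _ hz₀,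
        Complex.cpow_intCast, zpow_neg, zpow_natCast, pow_succ, inv_pow]
      ring
    simp only [emb, hterm]
    rw [tsum_mul_left, tsum_geometric_of_norm_lt_one
      (by rwa [norm_inv, inv_lt_one₀ (one_pos.trans hz)])]
    field_simp
  · rintro ⟨⟨j₁, j₂⟩, h₁, h₂⟩ hq
    have hj₁ : j₁ = 1 := by
      by_contra hj₁
      exact hq (by simp only; rw [hI₀ j₁ j₂ (by omega), mul_zero])
    exact ⟨(-j₂ - 1).toNat, Subtype.ext (Prod.ext (by simp [emb, hj₁]) (by simp [emb]; omega))⟩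

namespace Padic

variable {p : ℕ} [Fact p.Prime]

theorem norm_le_inv_of_norm_lt_one {x : ℚ_[p]} (hx : ‖x‖ < 1) : ‖x‖ ≤ (p : ℝ)⁻¹ := by
  simpa using (norm_le_pow_iff_norm_lt_pow_add_one x (-1)).2 (by simpa using hx)

theorem norm_intCast_div_zpow {a : ℤ} (ha : ¬ (p : ℤ) ∣ a) (j : ℤ) :
    ‖(a : ℚ_[p]) / (p : ℚ_[p]) ^ j‖ = (p : ℝ) ^ j := by
  have ha' : ‖(a : ℚ_[p])‖ = 1 :=
    (norm_int_le_one a).antisymm (not_lt.1 fun h ↦ ha (norm_intCast_lt_one_iff.1 h))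
  rw [norm_div, ha', norm_p_zpow, one_div, zpow_neg, inv_inv]

theorem continuous_addChar_of_forall_norm_le_one {ψ : AddChar ℚ_[p] ℂ}
    (hψ : ∀ x : ℚ_[p], ‖x‖ ≤ 1 → ψ x = 1) :
    Continuous ψ := by
  refine IsLocallyConstant.continuous ((IsLocallyConstant.iff_eventually_eq _).2 fun x ↦ ?_)
  filter_upwards [closedBall_mem_nhds x one_pos] with y hy
  rw [← sub_add_cancel y x, AddChar.map_add_eq_mul, hψ _ (by simpa [dist_eq_norm] using hy),
    one_mul]

theorem closedBall_zero_one_eq_iUnion_ball :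
    closedBall (0 : ℚ_[p]) 1 = ⋃ i : Fin p, ball (i : ℚ_[p]) 1 := by
  ext x
  simp only [mem_closedBall_zero_iff, Set.mem_iUnion, mem_ball, dist_eq_norm]
  constructor
  · intro hx
    obtain ⟨n, hn, hmem⟩ := PadicInt.exists_mem_range (⟨x, hx⟩ : ℤ_[p])
    exact ⟨⟨n, hn⟩, PadicInt.mem_nonunits.1 ((IsLocalRing.mem_maximalIdeal _).1 hmem)⟩
  · rintro ⟨i, hi⟩
    calc ‖x‖ = ‖(x - i) + (i : ℚ_[p])‖ := by rw [sub_add_cancel]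
      _ ≤ max ‖x - i‖ ‖(i : ℚ_[p])‖ := nonarchimedean _ _
      _ ≤ 1 := max_le hi.le (by simpa using norm_int_le_one (p := p) i)

theorem pairwise_disjoint_ball_natCast :
    Pairwise (Function.onFun Disjoint fun i : Fin p ↦ ball (i : ℚ_[p]) 1) := by
  intro i j hij
  refine (IsUltrametricDist.ball_eq_or_disjoint _ _ _).resolve_left fun heq ↦ hij ?_
  have hdist : ‖((i - j : ℤ) : ℚ_[p])‖ < 1 := by
    have := heq ▸ mem_ball_self (x := (i : ℚ_[p])) one_pos
    simpa [dist_eq_norm] using this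
  have := Int.eq_zero_of_abs_lt_dvd (norm_intCast_lt_one_iff.1 hdist) (by rw [abs_lt]; omega)
  omega

variable [MeasurableSpace ℚ_[p]]

theorem setIntegral_addChar_mul_eq_measureReal (μ : Measure ℚ_[p]) {ψ : AddChar ℚ_[p] ℂ}
    (hψ : ∀ x : ℚ_[p], ‖x‖ ≤ 1 → ψ x = 1)
    {s : Set ℚ_[p]} (hs : MeasurableSet s) {c : ℚ_[p]} (hc : ∀ x ∈ s, ‖c * x‖ ≤ 1) :
    ∫ x in s, ψ (c * x) ∂μ = μ.real s := by
  rw [setIntegral_congr_fun hs fun x hx ↦ hψ _ (hc x hx), setIntegral_const, Complex.real_smul,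
    mul_one]

theorem setIntegral_units_prod_eq_mul (μ : Measure ℚ_[p]) [SFinite μ] (ψ : AddChar ℚ_[p] ℂ)
    (a₁ a₂ j₁ j₂ : ℤ) :
    ∫ z in {z : ℚ_[p] × ℚ_[p] | ‖z.1‖ = 1 ∧ ‖z.2‖ = 1},
        ψ ((a₁ : ℚ_[p]) * z.1 / (p : ℚ_[p]) ^ j₁ + (a₂ : ℚ_[p]) * z.2 / (p : ℚ_[p]) ^ j₂)
        ∂(μ.prod μ)
      = (∫ x in sphere 0 1, ψ ((a₁ : ℚ_[p]) / (p : ℚ_[p]) ^ j₁ * x) ∂μ)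
        * ∫ x in sphere 0 1, ψ ((a₂ : ℚ_[p]) / (p : ℚ_[p]) ^ j₂ * x) ∂μ := by
  have hset : {z : ℚ_[p] × ℚ_[p] | ‖z.1‖ = 1 ∧ ‖z.2‖ = 1} = sphere 0 1 ×ˢ sphere 0 1 := by
    ext z
    simp
  rw [hset, ← setIntegral_prod_mul]
  congr with z
  rw [← AddChar.map_add_eq_mul]
  ring_nf

variable [BorelSpace ℚ_[p]]

theorem measure_closedBall_zero_one (μ : Measure ℚ_[p]) [μ.IsAddLeftInvariant] :
    μ (closedBall 0 1) = p * μ (ball 0 1) := by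
  have htranslate : ∀ i : Fin p, μ (ball (i : ℚ_[p]) 1) = μ (ball 0 1) := fun i ↦ by
    rw [← measure_preimage_add μ (-(i : ℚ_[p])) (ball 0 1)]
    congr 1
    ext x
    simp [dist_eq_norm, add_comm]
  rw [closedBall_zero_one_eq_iUnion_ball,
    measure_iUnion pairwise_disjoint_ball_natCast fun _ ↦ measurableSet_ball]
  simp [htranslate]

theorem measureReal_ball_zero_one (μ : Measure ℚ_[p]) [μ.IsAddLeftInvariant]
    (hμ : μ (closedBall 0 1) = 1) : μ.real (ball 0 1) = (p : ℝ)⁻¹ := by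
  rw [measure_closedBall_zero_one, mul_comm] at hμ
  rw [measureReal_def, ENNReal.eq_inv_of_mul_eq_one_left hμ, ENNReal.toReal_inv,
    ENNReal.toReal_natCast]

variable (μ : Measure ℚ_[p]) [μ.IsAddHaarMeasure] {ψ : AddChar ℚ_[p] ℂ}

theorem setIntegral_closedBall_addChar_mul_eq_zero (hψ : ∃ x : ℚ_[p], ‖x‖ ≤ p ∧ ψ x ≠ 1)
    {c : ℚ_[p]} (hc : (p : ℝ) ≤ ‖c‖) : ∫ x in closedBall 0 1, ψ (c * x) ∂μ = 0 := by
  obtain ⟨y, hy, hψy⟩ := hψ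
  have hc₀ : 0 < ‖c‖ := lt_of_lt_of_le (by exact_mod_cast (Fact.out : p.Prime).pos) hc
  refine AddChar.setIntegral_comp_mul_left_eq_zero μ ψ
    (IsUltrametricDist.closedBall_openAddSubgroup ℚ_[p] one_pos).toAddSubgroup
    measurableSet_closedBall (norm_pos_iff.1 hc₀) ?_ hψy
  show c⁻¹ * y ∈ closedBall 0 1
  rw [mem_closedBall_zero_iff, norm_mul, norm_inv, inv_mul_le_iff₀ hc₀, mul_one]
  exact hy.trans hc

theorem setIntegral_ball_addChar_mul_eq_zero (hψ : ∃ x : ℚ_[p], ‖x‖ ≤ p ∧ ψ x ≠ 1)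
    {c : ℚ_[p]} (hc : (p : ℝ) < ‖c‖) : ∫ x in ball 0 1, ψ (c * x) ∂μ = 0 := by
  obtain ⟨y, hy, hψy⟩ := hψ
  have hc₀ : 0 < ‖c‖ := lt_of_le_of_lt (Nat.cast_nonneg p) hc
  refine AddChar.setIntegral_comp_mul_left_eq_zero μ ψ
    (IsUltrametricDist.ball_openAddSubgroup ℚ_[p] one_pos).toAddSubgroup
    measurableSet_ball (norm_pos_iff.1 hc₀) ?_ hψy
  show c⁻¹ * y ∈ ball 0 1
  rw [mem_ball_zero_iff, norm_mul, norm_inv, inv_mul_lt_iff₀ hc₀, mul_one]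
  exact hy.trans_lt hc

theorem setIntegral_sphere_addChar_mul (hψ : ∀ x : ℚ_[p], ‖x‖ ≤ 1 → ψ x = 1) (c : ℚ_[p]) :
    ∫ x in sphere 0 1, ψ (c * x) ∂μ
      = ∫ x in closedBall 0 1, ψ (c * x) ∂μ - ∫ x in ball 0 1, ψ (c * x) ∂μ := by
  have hint : IntegrableOn (fun x ↦ ψ (c * x)) (closedBall (0 : ℚ_[p]) 1) μ :=
    ((continuous_addChar_of_forall_norm_le_one hψ).comp (continuous_const_mul c)).continuousOn
      |>.integrableOn_compact (isCompact_closedBall 0 1)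
  rw [← closedBall_sdiff_ball, setIntegral_sdiff measurableSet_ball hint ball_subset_closedBall]

theorem setIntegral_sphere_addChar_mul_of_norm_le_one (hψ : ∀ x : ℚ_[p], ‖x‖ ≤ 1 → ψ x = 1)
    (hμ : μ (closedBall 0 1) = 1) {c : ℚ_[p]} (hc : ‖c‖ ≤ 1) :
    ∫ x in sphere 0 1, ψ (c * x) ∂μ = 1 - (p : ℂ)⁻¹ := by
  have hle : ∀ x ∈ closedBall (0 : ℚ_[p]) 1, ‖c * x‖ ≤ 1 := fun x hx ↦ by
    rw [norm_mul]
    exact mul_le_one₀ hc (norm_nonneg x) (mem_closedBall_zero_iff.1 hx)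
  rw [setIntegral_sphere_addChar_mul μ hψ,
    setIntegral_addChar_mul_eq_measureReal μ hψ measurableSet_closedBall hle,
    setIntegral_addChar_mul_eq_measureReal μ hψ measurableSet_ball
      fun x hx ↦ hle x (ball_subset_closedBall hx),
    measureReal_def, hμ, measureReal_ball_zero_one μ hμ]
  simp

theorem setIntegral_sphere_addChar_mul_of_norm_eq (hψ₁ : ∀ x : ℚ_[p], ‖x‖ ≤ 1 → ψ x = 1)
    (hψ₂ : ∃ x : ℚ_[p], ‖x‖ ≤ p ∧ ψ x ≠ 1) (hμ : μ (closedBall 0 1) = 1) {c : ℚ_[p]}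
    (hc : ‖c‖ = p) : ∫ x in sphere 0 1, ψ (c * x) ∂μ = -(p : ℂ)⁻¹ := by
  have hle : ∀ x ∈ ball (0 : ℚ_[p]) 1, ‖c * x‖ ≤ 1 := fun x hx ↦ by
    have hp : (0 : ℝ) < p := by exact_mod_cast (Fact.out : p.Prime).pos
    rw [norm_mul, hc, ← le_div_iff₀' hp, one_div]
    exact norm_le_inv_of_norm_lt_one (mem_ball_zero_iff.1 hx)
  rw [setIntegral_sphere_addChar_mul μ hψ₁,
    setIntegral_closedBall_addChar_mul_eq_zero μ hψ₂ hc.ge,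
    setIntegral_addChar_mul_eq_measureReal μ hψ₁ measurableSet_ball hle,
    measureReal_ball_zero_one μ hμ]
  simp

theorem setIntegral_sphere_addChar_mul_of_lt_norm (hψ₁ : ∀ x : ℚ_[p], ‖x‖ ≤ 1 → ψ x = 1)
    (hψ₂ : ∃ x : ℚ_[p], ‖x‖ ≤ p ∧ ψ x ≠ 1) {c : ℚ_[p]} (hc : (p : ℝ) < ‖c‖) :
    ∫ x in sphere 0 1, ψ (c * x) ∂μ = 0 := by
  rw [setIntegral_sphere_addChar_mul μ hψ₁, setIntegral_closedBall_addChar_mul_eq_zero μ hψ₂ hc.le,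
    setIntegral_ball_addChar_mul_eq_zero μ hψ₂ hc, sub_zero]

theorem setIntegral_units_prod_eq_zero (hψ₁ : ∀ x : ℚ_[p], ‖x‖ ≤ 1 → ψ x = 1)
    (hψ₂ : ∃ x : ℚ_[p], ‖x‖ ≤ p ∧ ψ x ≠ 1) {a₁ : ℤ} (ha₁ : ¬ (p : ℤ) ∣ a₁) (a₂ : ℤ) {j₁ : ℤ}
    (hj₁ : 2 ≤ j₁) (j₂ : ℤ) :
    ∫ z in {z : ℚ_[p] × ℚ_[p] | ‖z.1‖ = 1 ∧ ‖z.2‖ = 1},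
        ψ ((a₁ : ℚ_[p]) * z.1 / (p : ℚ_[p]) ^ j₁ + (a₂ : ℚ_[p]) * z.2 / (p : ℚ_[p]) ^ j₂)
        ∂(μ.prod μ) = 0 := by
  have hp : (1 : ℝ) < p := by exact_mod_cast (Fact.out : p.Prime).one_lt
  rw [setIntegral_units_prod_eq_mul, setIntegral_sphere_addChar_mul_of_lt_norm μ hψ₁ hψ₂,
    zero_mul]
  rw [norm_intCast_div_zpow ha₁]
  simpa using zpow_lt_zpow_right₀ hp (show (1 : ℤ) < j₁ by omega)

theorem setIntegral_units_prod_of_eq_one (hψ₁ : ∀ x : ℚ_[p], ‖x‖ ≤ 1 → ψ x = 1)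
    (hψ₂ : ∃ x : ℚ_[p], ‖x‖ ≤ p ∧ ψ x ≠ 1) (hμ : μ (closedBall 0 1) = 1) {a₁ : ℤ}
    (ha₁ : ¬ (p : ℤ) ∣ a₁) (a₂ : ℤ) {j₂ : ℤ} (hj₂ : j₂ ≤ 0) :
    ∫ z in {z : ℚ_[p] × ℚ_[p] | ‖z.1‖ = 1 ∧ ‖z.2‖ = 1},
        ψ ((a₁ : ℚ_[p]) * z.1 / (p : ℚ_[p]) ^ (1 : ℤ) + (a₂ : ℚ_[p]) * z.2 / (p : ℚ_[p]) ^ j₂)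
        ∂(μ.prod μ) = -(p : ℂ)⁻¹ * (1 - (p : ℂ)⁻¹) := by
  rw [setIntegral_units_prod_eq_mul,
    setIntegral_sphere_addChar_mul_of_norm_eq μ hψ₁ hψ₂ hμ
      (by rw [norm_intCast_div_zpow ha₁, zpow_one]),
    setIntegral_sphere_addChar_mul_of_norm_le_one μ hψ₁ hμ]
  have hp : (1 : ℝ) ≤ p := by exact_mod_cast (Fact.out : p.Prime).one_le
  rw [norm_div, norm_p_zpow, div_le_one (by positivity)]
  exact (norm_int_le_one a₂).trans (one_le_zpow₀ hp (by omega))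

end Padic

theorem S1_eval_general (p : ℕ) [Fact p.Prime]
    [MeasurableSpace ℚ_[p]] [BorelSpace ℚ_[p]]
    (μ : Measure ℚ_[p]) [μ.IsAddHaarMeasure] (hμ : μ {x : ℚ_[p] | ‖x‖ ≤ 1} = 1)
    (ψ : AddChar ℚ_[p] ℂ) (hψ1 : ∀ x : ℚ_[p], ‖x‖ ≤ 1 → ψ x = 1)
    (hψ2 : ∃ x : ℚ_[p], ‖x‖ ≤ p ∧ ψ x ≠ 1)
    (a1 a2 : ℤ) (ha1 : ¬ (p : ℤ) ∣ a1) (s : ℂ)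
    (I : ℤ → ℤ → ℂ)
    (hI : ∀ j1 j2 : ℤ, I j1 j2 =
      ∫ z in {z : ℚ_[p] × ℚ_[p] | ‖z.1‖ = 1 ∧ ‖z.2‖ = 1},
        ψ ((a1 : ℚ_[p]) * z.1 / (p : ℚ_[p]) ^ j1
            + (a2 : ℚ_[p]) * z.2 / (p : ℚ_[p]) ^ j2) ∂(μ.prod μ)) :
    (∑' q : {q : ℤ × ℤ // 1 ≤ q.1 ∧ 2 * q.2 < q.1 ∧ 0 ≤ q.2},
        (p : ℂ) ^ (((q.1.1 + q.1.2 : ℤ) : ℂ) * (1 - s)) * I q.1.1 q.1.2)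
      + (∑' q : {q : ℤ × ℤ // 1 ≤ q.1 ∧ q.2 < 0},
        (p : ℂ) ^ (-((q.1.1 : ℤ) : ℂ) * s + ((q.1.1 : ℤ) : ℂ) + ((q.1.2 : ℤ) : ℂ))
          * I q.1.1 q.1.2)
      = -(p : ℂ) ^ (-s) := by
  have hμ' : μ (closedBall 0 1) = 1 := by simpa [closedBall, dist_eq_norm] using hμ
  have hI₀ : ∀ j₁ j₂, 2 ≤ j₁ → I j₁ j₂ = 0 := fun j₁ j₂ hj₁ ↦
    (hI _ _).trans (Padic.setIntegral_units_prod_eq_zero μ hψ1 hψ2 ha1 a2 hj₁ j₂)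
  have hI₁ : ∀ j₂ ≤ 0, I 1 j₂ = -(p : ℂ)⁻¹ * (1 - (p : ℂ)⁻¹) := fun j₂ hj₂ ↦
    (hI _ _).trans (Padic.setIntegral_units_prod_of_eq_one μ hψ1 hψ2 hμ' ha1 a2 hj₂)
  have hp : (1 : ℝ) < p := by exact_mod_cast (Fact.out : p.Prime).one_lt
  rw [tsum_cpow_mul_eq_single _ _ I hI₀, tsum_cpow_mul_eq_geometric _ _ _ (by simpa using hp) I hI₀
    fun j₂ hj₂ ↦ hI₁ j₂ hj₂.le, hI₁ 0 le_rfl]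
  have hp₀ : (p : ℂ) ≠ 0 := by exact_mod_cast (Fact.out : p.Prime).ne_zero
  have hp₁ : (p : ℂ) - 1 ≠ 0 := sub_ne_zero.2 (by exact_mod_cast hp.ne')
  rw [show (1 : ℂ) - s = 1 + -s by ring, Complex.cpow_add _ _ hp₀, Complex.cpow_one]
  field_simp
  ring

/-- For p ∤ a₁, the sum
S₁(s;a) = Σ_{j₁≥1, j₁>2j₂, j₂≥0} p^{(j₁+j₂)(1−s)} I(j₁,j₂)
        + Σ_{j₁≥1, j₂<0} p^{−j₁s+j₁+j₂} I(j₁,j₂),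
with I(j₁,j₂) = ∫_{U_p²} ψ(a₁x/p^{j₁} + a₂y/p^{j₂}) dx dy, equals −p^{−s}
for Re(s) > 3/2. -/
theorem S1_eval (p : ℕ) [Fact p.Prime]
    [MeasurableSpace ℚ_[p]] [BorelSpace ℚ_[p]]
    (μ : Measure ℚ_[p]) [μ.IsAddHaarMeasure] (hμ : μ {x : ℚ_[p] | ‖x‖ ≤ 1} = 1)
    (ψ : AddChar ℚ_[p] ℂ) (hψ1 : ∀ x : ℚ_[p], ‖x‖ ≤ 1 → ψ x = 1)
    (hψ2 : ∃ x : ℚ_[p], ‖x‖ ≤ p ∧ ψ x ≠ 1)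
    (a1 a2 : ℤ) (ha1 : ¬ (p : ℤ) ∣ a1) (s : ℂ) (hs : 3 / 2 < s.re)
    (I : ℤ → ℤ → ℂ)
    (hI : ∀ j1 j2 : ℤ, I j1 j2 =
      ∫ z in {z : ℚ_[p] × ℚ_[p] | ‖z.1‖ = 1 ∧ ‖z.2‖ = 1},
        ψ ((a1 : ℚ_[p]) * z.1 / (p : ℚ_[p]) ^ j1
            + (a2 : ℚ_[p]) * z.2 / (p : ℚ_[p]) ^ j2) ∂(μ.prod μ)) :
    (∑' q : {q : ℤ × ℤ // 1 ≤ q.1 ∧ 2 * q.2 < q.1 ∧ 0 ≤ q.2},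
        (p : ℂ) ^ (((q.1.1 + q.1.2 : ℤ) : ℂ) * (1 - s)) * I q.1.1 q.1.2)
      + (∑' q : {q : ℤ × ℤ // 1 ≤ q.1 ∧ q.2 < 0},
        (p : ℂ) ^ (-((q.1.1 : ℤ) : ℂ) * s + ((q.1.1 : ℤ) : ℂ) + ((q.1.2 : ℤ) : ℂ))
          * I q.1.1 q.1.2)
      = -(p : ℂ) ^ (-s) :=
  S1_eval_general p μ hμ ψ hψ1 hψ2 a1 a2 ha1 s I hI
end

section
/- For coprime integers λ, μ with μ ≠ 0, if the point (μ²τ₀, λμτ₀, λ²τ₀+μτ₁, λτ₁) has Euclidean norm at most B, then |τ₀| ≪ B/(λ²+μ²) and |τ₁| ≪ B/max(|λ|,|μ|); in particular the line V_y contributes no points of height ≤ B unless |λ|, |μ| ≤ √B. -/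
lemma aux_t0 (l m t0 t1 : ℝ) :
    (l^2+m^2)^2*t0^2 ≤ 16*((m^2*t0)^2 + (l*m*t0)^2 + (l^2*t0+m*t1)^2 + (l*t1)^2) := by
  nlinarith [sq_nonneg (m*(l^2*t0+m*t1)+l*(l*t1)), sq_nonneg (l*t0), sq_nonneg (m*t0),
    sq_nonneg l, sq_nonneg m, sq_nonneg (l*m*t0), sq_nonneg (m^2*t0), sq_nonneg (l^2*t0),
    sq_nonneg (l^2*t0+m*t1), sq_nonneg (l*t1), mul_nonneg (sq_nonneg l) (sq_nonneg (m*t0)),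
    mul_nonneg (sq_nonneg m) (sq_nonneg (l*t0))]

lemma aux_t1m (l m t0 t1 : ℝ) (hlm : l^2 ≤ m^2) (hm : 1 ≤ m^2) :
    m^2*t1^2 ≤ 2*((m^2*t0)^2 + (l*m*t0)^2 + (l^2*t0+m*t1)^2 + (l*t1)^2) := by
  have h : m^2*t1^2*m^2 ≤ (2*((m^2*t0)^2 + (l*m*t0)^2 + (l^2*t0+m*t1)^2 + (l*t1)^2))*m^2 := by
    nlinarith [sq_nonneg (l*(l^2*t0+m*t1) + m*(l*m*t0)), sq_nonneg (m^2*t0),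
      sq_nonneg (l*t1), mul_nonneg (sub_nonneg.2 hlm) (sq_nonneg (l^2*t0+m*t1)),
      mul_nonneg (sub_nonneg.2 hlm) (sq_nonneg (l*m*t0))]
  have hm0 : (0:ℝ) < m^2 := lt_of_lt_of_le one_pos hm
  exact le_of_mul_le_mul_right h hm0

lemma aux_l4 (l m t0 t1 : ℝ) (ht0 : 1 ≤ t0^2) (hm : 1 ≤ m^2) :
    l^4 ≤ (m^2*t0)^2 + (l*m*t0)^2 + (l^2*t0+m*t1)^2 + (l*t1)^2 := by
  have hpos : (0:ℝ) < l^2 + m^2 := by nlinarith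
  have h : l^4 * (l^2+m^2) ≤ ((m^2*t0)^2 + (l*m*t0)^2 + (l^2*t0+m*t1)^2 + (l*t1)^2) * (l^2+m^2) := by
    nlinarith [sq_nonneg (m*(l^2*t0+m*t1)+l*(l*t1)), mul_nonneg (sub_nonneg.2 ht0) (sq_nonneg (m^2+2*l^2)),
      mul_nonneg (sub_nonneg.2 ht0) (mul_nonneg (sq_nonneg m) (sq_nonneg (l^2+m^2))),
      mul_nonneg (sub_nonneg.2 ht0) (sq_nonneg (l^3)),
      mul_nonneg (sub_nonneg.2 hm) (sq_nonneg (m*l)), mul_nonneg (sub_nonneg.2 hm) (sq_nonneg (m^2)),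
      mul_nonneg (sub_nonneg.2 hm) (sq_nonneg l)]
  exact le_of_mul_le_mul_right h hpos

lemma aux_m4 (l m t0 t1 : ℝ) (ht0 : 1 ≤ t0^2) :
    m^4 ≤ (m^2*t0)^2 + (l*m*t0)^2 + (l^2*t0+m*t1)^2 + (l*t1)^2 := by
  nlinarith [sq_nonneg (l*m*t0), sq_nonneg (l^2*t0+m*t1), sq_nonneg (l*t1),
    mul_nonneg (sub_nonneg.2 ht0) (sq_nonneg (m^2))]

/-- If the point (μ²τ₀, λμτ₀, λ²τ₀+μτ₁, λτ₁) has Euclidean norm at most B then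
|τ₀| ≪ B/(λ²+μ²) and |τ₁| ≪ B/max(|λ|,|μ|); in particular if max(|λ|,|μ|) > √B
there are no such points. -/
theorem line_point_bounds :
    (∃ c : ℝ, 0 < c ∧ ∀ (l m τ0 τ1 : ℤ) (B : ℝ),
      Int.gcd l m = 1 → m ≠ 0 → τ0 ≠ 0 →
      Real.sqrt (((m : ℝ) ^ 2 * τ0) ^ 2 + ((l : ℝ) * m * τ0) ^ 2
        + ((l : ℝ) ^ 2 * τ0 + (m : ℝ) * τ1) ^ 2 + ((l : ℝ) * τ1) ^ 2) ≤ B →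
      |(τ0 : ℝ)| ≤ c * B / ((l : ℝ) ^ 2 + (m : ℝ) ^ 2) ∧
      |(τ1 : ℝ)| ≤ c * B / max |(l : ℝ)| |(m : ℝ)|) ∧
    (∀ (l m : ℤ) (B : ℝ), Int.gcd l m = 1 → m ≠ 0 →
      Real.sqrt B < max |(l : ℝ)| |(m : ℝ)| →
      ¬ ∃ τ0 τ1 : ℤ, τ0 ≠ 0 ∧
        Real.sqrt (((m : ℝ) ^ 2 * τ0) ^ 2 + ((l : ℝ) * m * τ0) ^ 2
          + ((l : ℝ) ^ 2 * τ0 + (m : ℝ) * τ1) ^ 2 + ((l : ℝ) * τ1) ^ 2) ≤ B) := by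
  constructor
  · refine ⟨4, by norm_num, ?_⟩
    intro l m τ0 τ1 B _ hm hτ0 hsq
    set S : ℝ := ((m : ℝ) ^ 2 * τ0) ^ 2 + ((l : ℝ) * m * τ0) ^ 2
        + ((l : ℝ) ^ 2 * τ0 + (m : ℝ) * τ1) ^ 2 + ((l : ℝ) * τ1) ^ 2 with hSdef
    have hS0 : 0 ≤ S := by positivity
    have hB : 0 ≤ B := (Real.sqrt_nonneg S).trans hsq
    have hS2 : S ≤ B ^ 2 := by
      have := pow_le_pow_left₀ (Real.sqrt_nonneg S) hsq 2
      rwa [Real.sq_sqrt hS0] at this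
    have hm1 : (1:ℝ) ≤ (m:ℝ)^2 := by
      have : (1:ℤ) ≤ m^2 := by rcases lt_or_gt_of_ne hm with h|h <;> nlinarith
      exact_mod_cast this
    have hpos : (0:ℝ) < (l:ℝ)^2 + (m:ℝ)^2 := by nlinarith
    constructor
    · have key := aux_t0 (l:ℝ) (m:ℝ) (τ0:ℝ) (τ1:ℝ)
      have h2 : (((l:ℝ)^2+(m:ℝ)^2) * |(τ0:ℝ)|)^2 ≤ (4*B)^2 := by
        rw [mul_pow, sq_abs]
        calc ((l:ℝ)^2+(m:ℝ)^2)^2 * (τ0:ℝ)^2 ≤ 16 * S := key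
          _ ≤ 16 * B^2 := by linarith
          _ = (4*B)^2 := by ring
      have h3 : ((l:ℝ)^2+(m:ℝ)^2) * |(τ0:ℝ)| ≤ 4*B :=
        le_of_pow_le_pow_left₀ two_ne_zero (by positivity) h2
      rw [le_div_iff₀ hpos]
      linarith
    · have hmax0 : (0:ℝ) < max |(l:ℝ)| |(m:ℝ)| := by
        have : (0:ℝ) < |(m:ℝ)| := by
          simpa using abs_pos.2 (by exact_mod_cast hm : ((m:ℝ)) ≠ 0)
        exact lt_of_lt_of_le this (le_max_right _ _)
      have hkey : (max |(l:ℝ)| |(m:ℝ)|)^2 * (τ1:ℝ)^2 ≤ 2 * S := by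
        rcases le_total (|(l:ℝ)|) (|(m:ℝ)|) with hc | hc
        · rw [max_eq_right hc]
          have hlm : (l:ℝ)^2 ≤ (m:ℝ)^2 := by
            have := mul_self_le_mul_self (abs_nonneg _) hc
            simpa [← sq, sq_abs] using this
          have := aux_t1m (l:ℝ) (m:ℝ) (τ0:ℝ) (τ1:ℝ) hlm hm1
          simpa [sq_abs] using this
        · rw [max_eq_left hc]
          have : ((l:ℝ)*τ1)^2 ≤ S := by nlinarith [sq_nonneg ((m:ℝ)^2*τ0), sq_nonneg ((l:ℝ)*(m:ℝ)*τ0), sq_nonneg ((l:ℝ)^2*τ0+(m:ℝ)*τ1)]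
          calc |(l:ℝ)|^2 * (τ1:ℝ)^2 = ((l:ℝ)*τ1)^2 := by rw [sq_abs]; ring
            _ ≤ S := this
            _ ≤ 2*S := by linarith
      have h2 : (max |(l:ℝ)| |(m:ℝ)| * |(τ1:ℝ)|)^2 ≤ (4*B)^2 := by
        rw [mul_pow, sq_abs]
        nlinarith
      have h3 : max |(l:ℝ)| |(m:ℝ)| * |(τ1:ℝ)| ≤ 4*B :=
        le_of_pow_le_pow_left₀ two_ne_zero (by positivity) h2
      rw [le_div_iff₀ hmax0]
      linarith
  · rintro l m B _ hm hmax ⟨τ0, τ1, hτ0, hsq⟩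
    set S : ℝ := ((m : ℝ) ^ 2 * τ0) ^ 2 + ((l : ℝ) * m * τ0) ^ 2
        + ((l : ℝ) ^ 2 * τ0 + (m : ℝ) * τ1) ^ 2 + ((l : ℝ) * τ1) ^ 2 with hSdef
    have hS0 : 0 ≤ S := by positivity
    have hB : 0 ≤ B := (Real.sqrt_nonneg S).trans hsq
    have hS2 : S ≤ B ^ 2 := by
      have := pow_le_pow_left₀ (Real.sqrt_nonneg S) hsq 2
      rwa [Real.sq_sqrt hS0] at this
    have hm1 : (1:ℝ) ≤ (m:ℝ)^2 := by
      have : (1:ℤ) ≤ m^2 := by rcases lt_or_gt_of_ne hm with h|h <;> nlinarith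
      exact_mod_cast this
    have ht1 : (1:ℝ) ≤ (τ0:ℝ)^2 := by
      have : (1:ℤ) ≤ τ0^2 := by rcases lt_or_gt_of_ne hτ0 with h|h <;> nlinarith
      exact_mod_cast this
    have hBlt : B < (max |(l:ℝ)| |(m:ℝ)|)^2 := by
      have := mul_self_lt_mul_self (Real.sqrt_nonneg B) hmax
      rw [Real.mul_self_sqrt hB] at this
      rw [sq]; exact this
    have hmaxS : (max |(l:ℝ)| |(m:ℝ)|)^4 ≤ S := by
      rcases max_cases (|(l:ℝ)|) (|(m:ℝ)|) with ⟨h1, _⟩ | ⟨h1, _⟩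
      · rw [h1]
        have := aux_l4 (l:ℝ) (m:ℝ) (τ0:ℝ) (τ1:ℝ) ht1 hm1
        calc |(l:ℝ)|^4 = (l:ℝ)^4 := by rw [← abs_pow, abs_of_nonneg (by positivity)]
          _ ≤ S := this
      · rw [h1]
        have := aux_m4 (l:ℝ) (m:ℝ) (τ0:ℝ) (τ1:ℝ) ht1
        calc |(m:ℝ)|^4 = (m:ℝ)^4 := by rw [← abs_pow, abs_of_nonneg (by positivity)]
          _ ≤ S := this
    have hmax0 : (0:ℝ) ≤ max |(l:ℝ)| |(m:ℝ)| := le_trans (abs_nonneg _) (le_max_right _ _)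
    nlinarith [pow_le_pow_left₀ hB (le_of_lt hBlt) 2]
end
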